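/- For every tuple π̄ = (π_{il})_{1≤i≤4, 1≤l≤r_i} of plane partitions, the coefficient of the vertex term v_{π̄} at the trivial character is zero; in particular the bracket [−v_{π̄}] ∈ F is well defined. -/

import Mathlib

open Finset

noncomputable section

/-- A finite subset `π ⊆ ℕ³` is a plane partition if it is downward closed in each
coordinate. -/
def IsPlanePartition (π : Finset (ℕ × ℕ × ℕ)) : Prop :=
  (∀ a b c : ℕ, (a + 1, b, c) ∈ π → (a, b, c) ∈ π) ∧
  (∀ a b c : ℕ, (a, b + 1, c) ∈ π → (a, b, c) ∈ π) ∧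
  (∀ a b c : ℕ, (a, b, c + 1) ∈ π → (a, b, c) ∈ π)

/-- Index type for the variables: the three "rotation" variables together with one framing
variable for each pair `(i, l)` with `i ∈ {1,…,4}`, `1 ≤ l ≤ r_i`. -/
abbrev Idx (r : Fin 4 → ℕ) : Type := Fin 3 ⊕ (Σ i : Fin 4, Fin (r i))

/-- The ring of virtual characters: the group ring `ℤ[characters]`, where the character
group is the free abelian group on `t₁, t₂, t₃` and the `w_{il}`. -/
abbrev VirtualChar (r : Fin 4 → ℕ) : Type := AddMonoidAlgebra ℤ (Idx r → ℤ)

/-- The character with exponent vector `e`. -/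
def ch (r : Fin 4 → ℕ) (e : Idx r → ℤ) : VirtualChar r := AddMonoidAlgebra.single e 1

/-- The dual `bar` of a virtual character, inverting every character. -/
def bar (r : Fin 4 → ℕ) : VirtualChar r ≃ₐ[ℤ] VirtualChar r :=
  AddMonoidAlgebra.domCongr ℤ ℤ (AddEquiv.neg _)

/-- The exponent vector of `t_a`, where `t₄ := (t₁t₂t₃)⁻¹`. -/
def texp (r : Fin 4 → ℕ) (a : Fin 4) : Idx r → ℤ := fun x =>
  match x with
  | .inl b => if (a : ℕ) = 3 then -1 else if (b : ℕ) = (a : ℕ) then 1 else 0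
  | .inr _ => 0

/-- The exponent vector of the framing character `w_{il}`. -/
def wexp (r : Fin 4 → ℕ) (i : Fin 4) (l : Fin (r i)) : Idx r → ℤ := fun x =>
  match x with
  | .inl _ => 0
  | .inr p => if p = ⟨i, l⟩ then 1 else 0

/-- `Z_{il} := ∑_{(a,b,c) ∈ π} t_{i₁}^a t_{i₂}^b t_{i₃}^c`, where `i₁ < i₂ < i₃` are the
three elements of `{1,2,3,4} ∖ {i}` (realised by `Fin.succAbove`). -/
def Zch (r : Fin 4 → ℕ) (i : Fin 4) (π : Finset (ℕ × ℕ × ℕ)) : VirtualChar r :=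
  ∑ p ∈ π, ch r ((p.1 : ℤ) • texp r (i.succAbove 0) + (p.2.1 : ℤ) • texp r (i.succAbove 1)
      + (p.2.2 : ℤ) • texp r (i.succAbove 2))

/-- `K_i := ∑_{l=1}^{r_i} w_{il}`. -/
def Kch (r : Fin 4 → ℕ) (i : Fin 4) : VirtualChar r := ∑ l : Fin (r i), ch r (wexp r i l)

/-- `Q_i := ∑_{l=1}^{r_i} w_{il}·Z_{il}`. -/
def Qch (r : Fin 4 → ℕ) (pp : ∀ i : Fin 4, Fin (r i) → Finset (ℕ × ℕ × ℕ)) (i : Fin 4) :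
    VirtualChar r :=
  ∑ l : Fin (r i), ch r (wexp r i l) * Zch r i (pp i l)

/-- `Pbar_j := ∏_{l ∈ {1,2,3,4} ∖ {j}} (1 − t_l⁻¹)`. -/
def Pbar (r : Fin 4 → ℕ) (j : Fin 4) : VirtualChar r :=
  ∏ l ∈ Finset.univ.erase j, (1 - ch r (-texp r l))

/-- The vertex term `v_{π̄}` of a tuple `π̄ = (π_{il})` of plane partitions. -/
def vertex (r : Fin 4 → ℕ) (pp : ∀ i : Fin 4, Fin (r i) → Finset (ℕ × ℕ × ℕ)) :
    VirtualChar r :=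
  bar r (∑ i, Kch r i) * (∑ i, Qch r pp i)
    - (∑ j, Kch r j * ch r (texp r j) * bar r (∑ i, Qch r pp i))
    - (∑ j, Pbar r j * Qch r pp j * bar r (Qch r pp j))
    - ∑ j, ∑ i ∈ Finset.univ.filter (· < j),
        Pbar r j * (Qch r pp j * bar r (Qch r pp i) + Qch r pp i * bar r (Qch r pp j))

/-! ### Auxiliary definitions -/

def ind' (S : Finset (Fin 3)) (k : Fin 3) : ℕ := if k ∈ S then 1 else 0

def shift' (S : Finset (Fin 3)) (q : ℕ×ℕ×ℕ) : ℕ×ℕ×ℕ :=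
  (q.1 + ind' S 0, q.2.1 + ind' S 1, q.2.2 + ind' S 2)

def wt' (q : ℕ×ℕ×ℕ) : ℕ := q.1 + q.2.1 + q.2.2

/-! ### Plane partition combinatorics -/

section PP
variable {π : Finset (ℕ × ℕ × ℕ)}

lemma down1 (h : IsPlanePartition π) (k : ℕ) :
    ∀ a b c, (a + k, b, c) ∈ π → (a, b, c) ∈ π := by
  induction k with
  | zero => simp
  | succ n ih =>
      intro a b c hm
      exact ih a b c (h.1 (a + n) b c (by rw [Nat.add_succ] at hm; exact hm))

lemma down2 (h : IsPlanePartition π) (k : ℕ) :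
    ∀ a b c, (a, b + k, c) ∈ π → (a, b, c) ∈ π := by
  induction k with
  | zero => simp
  | succ n ih =>
      intro a b c hm
      exact ih a b c (h.2.1 a (b + n) c (by rw [Nat.add_succ] at hm; exact hm))

lemma down3 (h : IsPlanePartition π) (k : ℕ) :
    ∀ a b c, (a, b, c + k) ∈ π → (a, b, c) ∈ π := by
  induction k with
  | zero => simp
  | succ n ih =>
      intro a b c hm
      exact ih a b c (h.2.2 a b (c + n) (by rw [Nat.add_succ] at hm; exact hm))

lemma mem_down (h : IsPlanePartition π) {a b c a' b' c' : ℕ}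
    (hm : (a, b, c) ∈ π) (ha : a' ≤ a) (hb : b' ≤ b) (hc : c' ≤ c) :
    (a', b', c') ∈ π := by
  obtain ⟨k1, rfl⟩ := Nat.exists_eq_add_of_le ha
  obtain ⟨k2, rfl⟩ := Nat.exists_eq_add_of_le hb
  obtain ⟨k3, rfl⟩ := Nat.exists_eq_add_of_le hc
  exact down3 h k3 _ _ _ (down2 h k2 _ _ _ (down1 h k1 _ _ _ hm))

lemma zero_mem (h : IsPlanePartition π) (hne : π.Nonempty) : (0,0,0) ∈ π := by
  obtain ⟨⟨a,b,c⟩, hm⟩ := hne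
  exact mem_down h hm (Nat.zero_le _) (Nat.zero_le _) (Nat.zero_le _)

lemma sum8 (x : ℕ×ℕ×ℕ) :
    ∑ S ∈ (univ : Finset (Fin 3)).powerset, (-1:ℤ)^S.card *
      (if ind' S 0 ≤ x.1 ∧ ind' S 1 ≤ x.2.1 ∧ ind' S 2 ≤ x.2.2 then 1 else 0)
    = if x = (0,0,0) then 1 else 0 := by
  obtain ⟨a, b, c⟩ := x
  rw [show ((univ : Finset (Fin 3))).powerset =
    {∅, {0}, {1}, {2}, {0,1}, {0,2}, {1,2}, {0,1,2}} from by decide]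
  simp (config := {decide := true}) only [Finset.sum_insert, Finset.mem_insert,
    Finset.mem_singleton, Finset.sum_singleton, ind', Prod.mk.injEq]
  norm_num
  split_ifs <;> simp_all

lemma key : ∀ n (π : Finset (ℕ×ℕ×ℕ)), π.card = n → IsPlanePartition π →
    ∑ S ∈ (univ : Finset (Fin 3)).powerset, (-1:ℤ)^S.card *
      (∑ q ∈ π, if shift' S q ∈ π then (1:ℤ) else 0)
    = if (0,0,0) ∈ π then 1 else 0 := by
  intro n
  induction n using Nat.strong_induction_on with
  | _ n ih =>
    intro π hcard hπ
    rcases π.eq_empty_or_nonempty with rfl | hne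
    · simp
    obtain ⟨x, hx, hmax⟩ := π.exists_max_image wt' hne
    set π' := π.erase x with hπ'def
    have hπ' : IsPlanePartition π' := by
      refine ⟨fun a b c hm => ?_, fun a b c hm => ?_, fun a b c hm => ?_⟩ <;>
      · rw [Finset.mem_erase] at hm ⊢
        constructor
        · rintro rfl
          have := hmax _ hm.2
          simp [wt'] at this
        · first
          | exact hπ.1 _ _ _ hm.2
          | exact hπ.2.1 _ _ _ hm.2
          | exact hπ.2.2 _ _ _ hm.2
    have hcard' : π'.card = n - 1 := by
      rw [hπ'def, Finset.card_erase_of_mem hx, hcard]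
    have hn : n - 1 < n := by
      have : 0 < n := by rw [← hcard]; exact Finset.card_pos.mpr hne
      omega
    have IH := ih (n-1) hn π' hcard' hπ'
    have hsplit : ∀ S : Finset (Fin 3),
        (∑ q ∈ π, if shift' S q ∈ π then (1:ℤ) else 0)
        = (∑ q ∈ π', if shift' S q ∈ π' then (1:ℤ) else 0)
          + (if ind' S 0 ≤ x.1 ∧ ind' S 1 ≤ x.2.1 ∧ ind' S 2 ≤ x.2.2 then 1 else 0) := by
      intro S
      rw [← Finset.sum_erase_add π _ hx, ← hπ'def]
      have step1 : ∀ q ∈ π', (if shift' S q ∈ π then (1:ℤ) else 0)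
          = (if shift' S q ∈ π' then (1:ℤ) else 0) + (if shift' S q = x then 1 else 0) := by
        intro q hq
        by_cases hqx : shift' S q = x
        · have h1 : shift' S q ∈ π := hqx ▸ hx
          have h2 : shift' S q ∉ π' := by rw [hqx, hπ'def]; simp
          simp [*]
        · have hiff : shift' S q ∈ π' ↔ shift' S q ∈ π := by
            rw [hπ'def, Finset.mem_erase]; tauto
          simp [hqx, hiff]
      rw [Finset.sum_congr rfl step1, Finset.sum_add_distrib]
      rcases S.eq_empty_or_nonempty with rfl | hSne
      · have hsh : ∀ q : ℕ×ℕ×ℕ, shift' ∅ q = q := by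
          intro q; simp [shift', ind']
        have h1 : (∑ q ∈ π', if shift' ∅ q = x then (1:ℤ) else 0) = 0 := by
          apply Finset.sum_eq_zero
          intro q hq
          rw [hsh]
          exact if_neg (Finset.mem_erase.mp hq).1
        rw [h1, hsh x, if_pos hx, if_pos (by simp [ind'])]
        ring
      · obtain ⟨k, hk⟩ := hSne
        have hik : ind' S k = 1 := if_pos hk
        have hik1 : ind' S 0 = 1 ∨ ind' S 1 = 1 ∨ ind' S 2 = 1 := by
          fin_cases k <;> simp_all
        have hix : shift' S x ∉ π := by
          intro hmem
          have := hmax _ hmem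
          simp only [wt', shift'] at this
          omega
        rw [if_neg hix, add_zero]
        congr 1
        by_cases hle : ind' S 0 ≤ x.1 ∧ ind' S 1 ≤ x.2.1 ∧ ind' S 2 ≤ x.2.2
        · obtain ⟨q0, hq0⟩ : ∃ q0 : ℕ×ℕ×ℕ,
              q0 = (x.1 - ind' S 0, x.2.1 - ind' S 1, x.2.2 - ind' S 2) := ⟨_, rfl⟩
          have hcond : ∀ q : ℕ×ℕ×ℕ, shift' S q = x ↔ q = q0 := by
            intro q
            simp only [shift', hq0, Prod.ext_iff]
            constructor <;> intro h <;> [skip; skip] <;> omega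
          have hq0π : q0 ∈ π := by
            rw [hq0]
            exact mem_down hπ hx (Nat.sub_le _ _) (Nat.sub_le _ _) (Nat.sub_le _ _)
          have hq0x : q0 ≠ x := by
            intro h
            simp only [hq0, Prod.ext_iff] at h
            omega
          have hq0π' : q0 ∈ π' := by
            rw [hπ'def, Finset.mem_erase]; exact ⟨hq0x, hq0π⟩
          rw [Finset.sum_congr rfl (fun q _ => by rw [if_congr (hcond q) rfl rfl]),
            Finset.sum_ite_eq' π' q0 (fun _ => (1:ℤ)), if_pos hq0π', if_pos hle]
        · rw [if_neg hle]
          apply Finset.sum_eq_zero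
          intro q hq
          rw [if_neg]
          intro hqx
          apply hle
          simp only [shift', Prod.ext_iff] at hqx
          omega
    rw [Finset.sum_congr rfl (fun S _ => by rw [hsplit S, mul_add]),
      Finset.sum_add_distrib, IH, sum8 x]
    rw [if_pos (zero_mem hπ hne)]
    by_cases hx0 : x = (0,0,0)
    · have : (0,0,0) ∉ π' := by rw [hπ'def, ← hx0]; simp
      rw [if_neg this, if_pos hx0]
      norm_num
    · have : (0,0,0) ∈ π' := by
        rw [hπ'def, Finset.mem_erase]
        exact ⟨fun h => hx0 h.symm, zero_mem hπ hne⟩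
      rw [if_pos this, if_neg hx0]
      ring

end PP

/-! ### Virtual character computations -/

section VC
variable {r : Fin 4 → ℕ}

def Eexp (r : Fin 4 → ℕ) (i : Fin 4) (p : ℕ×ℕ×ℕ) : Idx r → ℤ :=
  (p.1 : ℤ) • texp r (i.succAbove 0) + (p.2.1 : ℤ) • texp r (i.succAbove 1)
    + (p.2.2 : ℤ) • texp r (i.succAbove 2)

lemma Zch_eq (i : Fin 4) (π : Finset (ℕ×ℕ×ℕ)) :
    Zch r i π = ∑ p ∈ π, ch r (Eexp r i p) := rfl

lemma ch_mul (e f : Idx r → ℤ) : ch r e * ch r f = ch r (e + f) := by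
  simp [ch, AddMonoidAlgebra.single_mul_single]

lemma ch_zero : ch r 0 = 1 := rfl

lemma bar_ch (e : Idx r → ℤ) : bar r (ch r e) = ch r (-e) := by
  simp [bar, ch]

lemma ch_apply0 (e : Idx r → ℤ) : (ch r e).coeff 0 = if e = 0 then 1 else 0 := by
  simp [ch, AddMonoidAlgebra.coeff_single, Finsupp.single_apply]

lemma sum_apply0 {γ : Type*} (s : Finset γ) (f : γ → VirtualChar r) :
    (∑ i ∈ s, f i).coeff 0 = ∑ i ∈ s, (f i).coeff 0 := by
  rw [AddMonoidAlgebra.coeff_sum, Finsupp.finset_sum_apply]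

lemma texp_indep (j : Fin 4) (a b c : ℤ)
    (h : ∀ m : Fin 3, a * texp r (j.succAbove 0) (Sum.inl m)
      + b * texp r (j.succAbove 1) (Sum.inl m)
      + c * texp r (j.succAbove 2) (Sum.inl m) = 0) :
    a = 0 ∧ b = 0 ∧ c = 0 := by
  have h0 := h 0; have h1 := h 1; have h2 := h 2
  fin_cases j <;>
    simp (config := { decide := true }) [texp, Fin.succAbove, Fin.lt_def] at h0 h1 h2 <;>
    omega

lemma texp_not_comb (j : Fin 4) (a b c : ℤ) (hz : 0 ≤ a ∧ 0 ≤ b ∧ 0 ≤ c)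
    (h : ∀ m : Fin 3, a * texp r (j.succAbove 0) (Sum.inl m)
      + b * texp r (j.succAbove 1) (Sum.inl m)
      + c * texp r (j.succAbove 2) (Sum.inl m) = texp r j (Sum.inl m)) :
    False := by
  have h0 := h 0; have h1 := h 1; have h2 := h 2
  fin_cases j <;>
    simp (config := { decide := true }) [texp, Fin.succAbove, Fin.lt_def] at h0 h1 h2 <;>
    omega

lemma texp_inr (a : Fin 4) (z : Σ i : Fin 4, Fin (r i)) : texp r a (Sum.inr z) = 0 := rfl

lemma wexp_inl (i : Fin 4) (l : Fin (r i)) (m : Fin 3) : wexp r i l (Sum.inl m) = 0 := rfl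

lemma wexp_inr (i : Fin 4) (l : Fin (r i)) (z : Σ i : Fin 4, Fin (r i)) :
    wexp r i l (Sum.inr z) = if z = ⟨i, l⟩ then 1 else 0 := rfl

lemma Eexp_inr (i : Fin 4) (p : ℕ×ℕ×ℕ) (z : Σ i : Fin 4, Fin (r i)) :
    Eexp r i p (Sum.inr z) = 0 := by
  simp [Eexp, texp_inr]

lemma Eexp_inl (i : Fin 4) (p : ℕ×ℕ×ℕ) (m : Fin 3) :
    Eexp r i p (Sum.inl m) = (p.1 : ℤ) * texp r (i.succAbove 0) (Sum.inl m)
      + (p.2.1 : ℤ) * texp r (i.succAbove 1) (Sum.inl m)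
      + (p.2.2 : ℤ) * texp r (i.succAbove 2) (Sum.inl m) := by
  simp [Eexp]

lemma T_inl (j : Fin 4) (S : Finset (Fin 3)) (m : Fin 3) :
    (∑ k ∈ S, texp r (j.succAbove k)) (Sum.inl m)
    = (if 0 ∈ S then (1:ℤ) else 0) * texp r (j.succAbove 0) (Sum.inl m)
      + (if 1 ∈ S then (1:ℤ) else 0) * texp r (j.succAbove 1) (Sum.inl m)
      + (if 2 ∈ S then (1:ℤ) else 0) * texp r (j.succAbove 2) (Sum.inl m) := by
  rw [Finset.sum_apply]
  have h := Finset.sum_ite_mem univ S (fun k => texp r (j.succAbove k) (Sum.inl m))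
  rw [Finset.univ_inter] at h
  rw [← h, Fin.sum_univ_three]
  split_ifs <;> ring

lemma T_inr (j : Fin 4) (S : Finset (Fin 3)) (z : Σ i : Fin 4, Fin (r i)) :
    (∑ k ∈ S, texp r (j.succAbove k)) (Sum.inr z) = 0 := by
  rw [Finset.sum_apply]
  simp [texp_inr]

end VC
section VC2
variable {r : Fin 4 → ℕ}

lemma prod_neg_ch {γ : Type*} (t : Finset γ) (e : γ → Idx r → ℤ) :
    ∏ k ∈ t, (-ch r (e k)) = (-1:ℤ)^t.card • ch r (∑ k ∈ t, e k) := by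
  induction t using Finset.cons_induction with
  | empty => simp [ch_zero]
  | cons a t ha ih =>
      rw [Finset.prod_cons, ih, Finset.sum_cons, Finset.card_cons, ← ch_mul, pow_succ,
        mul_smul_comm, neg_mul, smul_neg, mul_neg_one, neg_smul]

lemma Pbar_eq (j : Fin 4) : Pbar r j = ∑ S ∈ (univ : Finset (Fin 3)).powerset,
    (-1:ℤ)^S.card • ch r (-∑ k ∈ S, texp r (j.succAbove k)) := by
  have h1 : Finset.univ.erase j = Finset.univ.image j.succAbove := by
    rw [Fin.image_succAbove_univ, Finset.compl_singleton]
  rw [Pbar, h1, Finset.prod_image (fun a _ b _ h => Fin.succAbove_right_injective h)]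
  have h2 : ∀ k : Fin 3, (1 : VirtualChar r) - ch r (-texp r (j.succAbove k))
      = -ch r (-texp r (j.succAbove k)) + 1 := fun k => by ring
  rw [Finset.prod_congr rfl (fun k _ => h2 k), Finset.prod_add]
  refine Finset.sum_congr rfl fun S _ => ?_
  rw [Finset.prod_const_one, mul_one, prod_neg_ch, Finset.sum_neg_distrib]

lemma Qch_eq (pp : ∀ i : Fin 4, Fin (r i) → Finset (ℕ × ℕ × ℕ)) (j : Fin 4) :
    Qch r pp j = ∑ l : Fin (r j), ∑ p ∈ pp j l, ch r (wexp r j l + Eexp r j p) := by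
  rw [Qch]
  exact Finset.sum_congr rfl fun l _ => by
    rw [Zch_eq, Finset.mul_sum]
    exact Finset.sum_congr rfl fun p _ => ch_mul _ _

lemma sigK : (∑ i, Kch r i) = ∑ x : (Σ i : Fin 4, Fin (r i)), ch r (wexp r x.1 x.2) := by
  rw [← Finset.univ_sigma_univ, Finset.sum_sigma]
  rfl

lemma sigQ (pp : ∀ i : Fin 4, Fin (r i) → Finset (ℕ × ℕ × ℕ)) :
    (∑ i, Qch r pp i) = ∑ x : (Σ i : Fin 4, Fin (r i)),
      ∑ p ∈ pp x.1 x.2, ch r (wexp r x.1 x.2 + Eexp r x.1 p) := by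
  rw [← Finset.univ_sigma_univ, Finset.sum_sigma]
  exact Finset.sum_congr rfl fun i _ => Qch_eq pp i

end VC2

section VC3
variable {r : Fin 4 → ℕ}

lemma condA (x y : Σ i : Fin 4, Fin (r i)) (p : ℕ×ℕ×ℕ) :
    (-wexp r x.1 x.2 + (wexp r y.1 y.2 + Eexp r y.1 p) = 0) ↔ (x = y ∧ p = (0,0,0)) := by
  constructor
  · intro h
    have hxy : x = y := by
      have hw := congrFun h (Sum.inr y)
      by_cases hyx : y = x
      · exact hyx.symm
      · simp [wexp_inr, Eexp_inr, Sigma.eta, hyx] at hw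
    subst hxy
    obtain ⟨p1, p2, p3⟩ := p
    have hE : Eexp r x.1 (p1, p2, p3) = 0 := by
      have h2 := h
      rwa [neg_add_cancel_left] at h2
    obtain ⟨h0, h1, h2⟩ := texp_indep x.1 (p1:ℤ) (p2:ℤ) (p3:ℤ) (fun m => by
      have hh := congrFun hE (Sum.inl m)
      rw [Eexp_inl] at hh
      simpa using hh)
    refine ⟨rfl, ?_⟩
    simp only [Prod.mk.injEq]
    omega
  · rintro ⟨rfl, rfl⟩
    have : Eexp r x.1 (0,0,0) = 0 := by
      simp [Eexp]
    rw [this, add_zero, neg_add_cancel]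

lemma condB (j : Fin 4) (mm : Fin (r j)) (y : Σ i : Fin 4, Fin (r i)) (p : ℕ×ℕ×ℕ) :
    wexp r j mm + texp r j + -(wexp r y.1 y.2 + Eexp r y.1 p) ≠ 0 := by
  obtain ⟨y1, y2⟩ := y
  intro h
  have hw := congrFun h (Sum.inr ⟨j, mm⟩)
  by_cases hyx : (⟨j, mm⟩ : Σ i : Fin 4, Fin (r i)) = ⟨y1, y2⟩
  case neg =>
    simp [wexp_inr, Eexp_inr, texp_inr, hyx] at hw
  case pos =>
    obtain ⟨rfl, h2⟩ := Sigma.mk.inj_iff.mp hyx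
    have h2' := eq_of_heq h2
    subst h2'
    refine texp_not_comb (r := r) j (p.1:ℤ) (p.2.1:ℤ) (p.2.2:ℤ)
      ⟨Int.natCast_nonneg _, Int.natCast_nonneg _, Int.natCast_nonneg _⟩ (fun m => ?_)
    have hh := congrFun h (Sum.inl m)
    simp only [Pi.add_apply, Pi.neg_apply, Pi.zero_apply, wexp_inl, Eexp_inl] at hh
    linarith [hh]

lemma condC (j : Fin 4) (S : Finset (Fin 3)) (l m : Fin (r j)) (p q : ℕ×ℕ×ℕ) :
    (-(∑ k ∈ S, texp r (j.succAbove k)) + (wexp r j l + Eexp r j p)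
      + -(wexp r j m + Eexp r j q) = 0)
    ↔ (l = m ∧ p = shift' S q) := by
  constructor
  · intro h
    have hlm : l = m := by
      have hw := congrFun h (Sum.inr ⟨j, l⟩)
      by_cases hlm : l = m
      · exact hlm
      · simp [wexp_inr, Eexp_inr, texp_inr, Finset.sum_apply, Sigma.mk.inj_iff, hlm] at hw
    subst hlm
    refine ⟨rfl, ?_⟩
    obtain ⟨h0, h1, h2⟩ := texp_indep j
      ((p.1:ℤ) - q.1 - (if 0 ∈ S then 1 else 0))
      ((p.2.1:ℤ) - q.2.1 - (if 1 ∈ S then 1 else 0))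
      ((p.2.2:ℤ) - q.2.2 - (if 2 ∈ S then 1 else 0)) (fun mm => by
      have hh := congrFun h (Sum.inl mm)
      simp only [Pi.add_apply, Pi.neg_apply, Pi.zero_apply, wexp_inl, Eexp_inl, T_inl] at hh
      linear_combination hh)
    obtain ⟨p1, p2, p3⟩ := p
    obtain ⟨q1, q2, q3⟩ := q
    simp only [shift', ind', Prod.ext_iff] at *
    split_ifs at h0 h1 h2 <;> simp_all <;> omega
  · rintro ⟨rfl, rfl⟩
    funext zz
    cases zz with
    | inl mm =>
        simp only [Pi.add_apply, Pi.neg_apply, Pi.zero_apply, wexp_inl, Eexp_inl, T_inl]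
        push_cast [shift', ind', apply_ite (Nat.cast : ℕ → ℤ)]
        ring
    | inr zz =>
        simp only [Pi.add_apply, Pi.neg_apply, Pi.zero_apply, wexp_inr, Eexp_inr, T_inr]
        ring

lemma condD {i j : Fin 4} (hij : i ≠ j) (S : Finset (Fin 3)) (l : Fin (r j)) (m : Fin (r i))
    (p q : ℕ×ℕ×ℕ) :
    -(∑ k ∈ S, texp r (j.succAbove k)) + (wexp r j l + Eexp r j p)
      + -(wexp r i m + Eexp r i q) ≠ 0 := by
  intro h
  have hw := congrFun h (Sum.inr ⟨j, l⟩)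
  simp [wexp_inr, Eexp_inr, texp_inr, Finset.sum_apply, Sigma.mk.inj_iff, Ne.symm hij] at hw

end VC3

section Main
variable {r : Fin 4 → ℕ} (pp : ∀ i : Fin 4, Fin (r i) → Finset (ℕ × ℕ × ℕ))

lemma term1_apply0 :
    (bar r (∑ i, Kch r i) * ∑ i, Qch r pp i).coeff 0
    = ∑ x : (Σ i : Fin 4, Fin (r i)), (if (0,0,0) ∈ pp x.1 x.2 then (1:ℤ) else 0) := by
  rw [sigK, sigQ, map_sum, Finset.sum_mul]
  simp only [bar_ch, Finset.mul_sum, ch_mul]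
  rw [sum_apply0]
  simp only [sum_apply0, ch_apply0]
  rw [Finset.sum_congr rfl (fun x _ => Finset.sum_congr rfl (fun y _ =>
    Finset.sum_congr rfl (fun p _ => by rw [if_congr (condA x y p) rfl rfl])))]
  have step : ∀ x y : (Σ i : Fin 4, Fin (r i)),
      (∑ p ∈ pp y.1 y.2, if x = y ∧ p = (0,0,0) then (1:ℤ) else 0)
      = if x = y then (if (0,0,0) ∈ pp y.1 y.2 then (1:ℤ) else 0) else 0 := by
    intro x y
    by_cases hxy : x = y
    · simp only [hxy, true_and, if_pos rfl]
      exact Finset.sum_ite_eq' _ _ _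
    · simp [hxy]
  rw [Finset.sum_congr rfl (fun x _ => Finset.sum_congr rfl (fun y _ => step x y))]
  simp only [Finset.sum_ite_eq, Finset.mem_univ, if_true]

lemma term2_apply0 :
    (∑ j, Kch r j * ch r (texp r j) * bar r (∑ i, Qch r pp i)).coeff 0 = 0 := by
  rw [sigQ]
  simp only [Kch, map_sum, bar_ch, Finset.sum_mul, Finset.mul_sum, ch_mul]
  simp only [sum_apply0, ch_apply0]
  refine Finset.sum_eq_zero fun j _ => Finset.sum_eq_zero fun y _ =>
    Finset.sum_eq_zero fun p _ => Finset.sum_eq_zero fun mm _ => ?_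
  exact if_neg (condB j mm y p)

lemma condD' (a b c : Fin 4) (hab : a ≠ b) (S : Finset (Fin 3))
    (l : Fin (r a)) (m : Fin (r b)) (p q : ℕ×ℕ×ℕ) :
    -(∑ k ∈ S, texp r (c.succAbove k)) + ((wexp r a l + Eexp r a p)
      + -(wexp r b m + Eexp r b q)) ≠ 0 := by
  intro h
  have hw := congrFun h (Sum.inr ⟨a, l⟩)
  simp [wexp_inr, Eexp_inr, texp_inr, Finset.sum_apply, Sigma.mk.inj_iff, hab] at hw

lemma termD_apply0 (a b c : Fin 4) (hab : a ≠ b) :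
    (Pbar r c * (Qch r pp a * bar r (Qch r pp b))).coeff 0 = 0 := by
  rw [Pbar_eq, Qch_eq pp a, Qch_eq pp b, map_sum]
  simp only [map_sum, bar_ch, Finset.sum_mul, Finset.mul_sum, smul_mul_assoc, ch_mul]
  simp only [sum_apply0, Finsupp.smul_apply, ch_apply0, smul_eq_mul]
  refine Finset.sum_eq_zero fun m _ => Finset.sum_eq_zero fun q _ =>
    Finset.sum_eq_zero fun l _ => Finset.sum_eq_zero fun p _ =>
    Finset.sum_eq_zero fun S _ => ?_
  rw [AddMonoidAlgebra.coeff_smul_apply, ch_apply0, if_neg (condD' a b c hab S l m p q), smul_zero]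

lemma term4_apply0 :
    (∑ j, ∑ i ∈ Finset.univ.filter (· < j),
        Pbar r j * (Qch r pp j * bar r (Qch r pp i) + Qch r pp i * bar r (Qch r pp j))).coeff 0
      = 0 := by
  rw [sum_apply0]
  refine Finset.sum_eq_zero fun j _ => ?_
  rw [sum_apply0]
  refine Finset.sum_eq_zero fun i hi => ?_
  have hij : i ≠ j := Fin.ne_of_lt (Finset.mem_filter.mp hi).2
  rw [mul_add, AddMonoidAlgebra.coeff_add, Finsupp.add_apply, termD_apply0 pp j i j (Ne.symm hij),
    termD_apply0 pp i j j hij, add_zero]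


lemma term3j_apply0 (hpp : ∀ i l, IsPlanePartition (pp i l)) (j : Fin 4) :
    (Pbar r j * Qch r pp j * bar r (Qch r pp j)).coeff 0
      = ∑ l : Fin (r j), (if (0,0,0) ∈ pp j l then (1:ℤ) else 0) := by
  rw [Pbar_eq, Qch_eq pp j, map_sum]
  simp only [map_sum, bar_ch, Finset.sum_mul, Finset.mul_sum, smul_mul_assoc, ch_mul]
  simp only [sum_apply0]
  have step0 : ∀ (m : Fin (r j)) (q : ℕ×ℕ×ℕ) (l : Fin (r j)) (p : ℕ×ℕ×ℕ)
      (S : Finset (Fin 3)),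
      (((-1:ℤ)^S.card • ch r (-∑ k ∈ S, texp r (j.succAbove k)
          + (wexp r j l + Eexp r j p) + -(wexp r j m + Eexp r j q))) : VirtualChar r).coeff 0
      = (-1:ℤ)^S.card * (if l = m ∧ p = shift' S q then 1 else 0) := by
    intro m q l p S
    rw [AddMonoidAlgebra.coeff_smul_apply, ch_apply0, smul_eq_mul,
      if_congr (condC j S l m p q) rfl rfl]
  rw [Finset.sum_congr rfl fun m _ => Finset.sum_congr rfl fun q _ =>
    Finset.sum_congr rfl fun l _ => Finset.sum_congr rfl fun p _ =>
    Finset.sum_congr rfl fun S _ => step0 m q l p S]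
  have inner : ∀ m : Fin (r j),
      (∑ q ∈ pp j m, ∑ l : Fin (r j), ∑ p ∈ pp j l, ∑ S ∈ (univ : Finset (Fin 3)).powerset,
        (-1:ℤ)^S.card * (if l = m ∧ p = shift' S q then 1 else 0))
      = if (0,0,0) ∈ pp j m then 1 else 0 := by
    intro m
    have e1 : ∀ q : ℕ×ℕ×ℕ,
        (∑ l : Fin (r j), ∑ p ∈ pp j l, ∑ S ∈ (univ : Finset (Fin 3)).powerset,
          (-1:ℤ)^S.card * (if l = m ∧ p = shift' S q then 1 else 0))
        = ∑ p ∈ pp j m, ∑ S ∈ (univ : Finset (Fin 3)).powerset,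
            (-1:ℤ)^S.card * (if p = shift' S q then 1 else 0) := by
      intro q
      have step : ∀ l : Fin (r j),
          (∑ p ∈ pp j l, ∑ S ∈ (univ : Finset (Fin 3)).powerset,
            (-1:ℤ)^S.card * (if l = m ∧ p = shift' S q then 1 else 0))
          = if l = m then (∑ p ∈ pp j l, ∑ S ∈ (univ : Finset (Fin 3)).powerset,
              (-1:ℤ)^S.card * (if p = shift' S q then 1 else 0)) else 0 := by
        intro l
        by_cases h : l = m
        · simp [h]
        · simp [h]
      rw [Finset.sum_congr rfl fun l _ => step l,
        Finset.sum_ite_eq' Finset.univ m _, if_pos (Finset.mem_univ m)]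
    rw [Finset.sum_congr rfl fun q _ => e1 q]
    have e2 : ∀ q : ℕ×ℕ×ℕ,
        (∑ p ∈ pp j m, ∑ S ∈ (univ : Finset (Fin 3)).powerset,
          (-1:ℤ)^S.card * (if p = shift' S q then 1 else 0))
        = ∑ S ∈ (univ : Finset (Fin 3)).powerset,
            (-1:ℤ)^S.card * (if shift' S q ∈ pp j m then 1 else 0) := by
      intro q
      rw [Finset.sum_comm]
      refine Finset.sum_congr rfl fun S _ => ?_
      rw [← Finset.mul_sum, Finset.sum_ite_eq' (pp j m) (shift' S q) (fun _ => (1:ℤ))]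
    rw [Finset.sum_congr rfl fun q _ => e2 q, Finset.sum_comm]
    rw [Finset.sum_congr rfl fun S _ => (Finset.mul_sum _ _ _).symm]
    exact key (pp j m).card (pp j m) rfl (hpp j m)
  rw [Finset.sum_congr rfl fun m _ => inner m]

lemma term3_apply0 (hpp : ∀ i l, IsPlanePartition (pp i l)) :
    (∑ j, Pbar r j * Qch r pp j * bar r (Qch r pp j)).coeff 0
    = ∑ x : (Σ i : Fin 4, Fin (r i)), (if (0,0,0) ∈ pp x.1 x.2 then (1:ℤ) else 0) := by
  rw [sum_apply0, ← Finset.univ_sigma_univ, Finset.sum_sigma]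
  exact Finset.sum_congr rfl fun j _ => term3j_apply0 pp hpp j


end Main

/-- **The vertex term has no contribution from the trivial character** (it is
`T`-movable): for every tuple `π̄ = (π_{il})` of plane partitions, the coefficient of the
vertex term `v_{π̄}` at the trivial character is zero; in particular the bracket
`[−v_{π̄}] ∈ F` is well defined. -/
theorem vertex_coeff_trivial_eq_zero (r : Fin 4 → ℕ)
    (pp : ∀ i : Fin 4, Fin (r i) → Finset (ℕ × ℕ × ℕ))
    (hpp : ∀ i l, IsPlanePartition (pp i l)) :
    (vertex r pp).coeff (0 : Idx r → ℤ) = 0 := by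
  unfold vertex
  rw [AddMonoidAlgebra.coeff_sub, AddMonoidAlgebra.coeff_sub, AddMonoidAlgebra.coeff_sub,
    Finsupp.sub_apply, Finsupp.sub_apply, Finsupp.sub_apply,
    term1_apply0 pp, term2_apply0 pp, term3_apply0 pp hpp, term4_apply0 pp]
  ring

end
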